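/- If the rank of F(n, A) is strictly less than n, then F(n, A) = A. -/

import Mathlib

/-!
`F n` is the identity on sets of rank at most `n`, since their elements have rank below `n`.
On the other hand `F n` cannot push a set of rank at least `n` below rank `n`: if
`n + 1 ≤ rank A`, some `x ∈ A` has `n ≤ rank x`, and by induction its image `F n x ∈ F (n + 1) A`
has rank at least `n`.
Hence `rank (F n A) < n` forces `rank A < n`, and then `F n A = A`.
-/

open ZFSet

/-- The approximation function: `F 0 A = ∅`, `F (n+1) A = {F n x | x ∈ A}`. -/
noncomputable def F : ℕ → ZFSet → ZFSet
  | 0, _ => ∅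
  | n + 1, A => @ZFSet.image (F n) (Classical.allZFSetDefinable fun s => F n (s 0)) A

theorem mem_F_succ {n : ℕ} {A y : ZFSet} : y ∈ F (n + 1) A ↔ ∃ x ∈ A, F n x = y := by
  simp [F, ZFSet.mem_image]

theorem F_eq_self_of_rank_le {n : ℕ} {A : ZFSet} (hA : A.rank ≤ n) : F n A = A := by
  induction n generalizing A with
  | zero =>
    refine ((ZFSet.eq_empty A).2 fun x hx => ?_).symm
    simpa using (ZFSet.rank_lt_of_mem hx).trans_le hA
  | succ n ih =>
    have hF : ∀ x ∈ A, F n x = x := fun x hx =>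
      ih (Order.lt_add_one_iff.1 (by exact_mod_cast ZFSet.rank_le_iff.1 hA hx))
    ext y
    rw [mem_F_succ]
    constructor
    · rintro ⟨x, hx, rfl⟩
      rwa [hF x hx]
    · exact fun hy => ⟨y, hy, hF y hy⟩

theorem natCast_le_rank_F {n : ℕ} {A : ZFSet} (hA : (n : Ordinal) ≤ A.rank) :
    (n : Ordinal) ≤ (F n A).rank := by
  induction n generalizing A with
  | zero => simp
  | succ n ih =>
    obtain ⟨x, hx, hnx⟩ : ∃ x ∈ A, (n : Ordinal) ≤ x.rank :=
      ZFSet.lt_rank_iff.1 ((Order.lt_add_one_iff.2 le_rfl).trans_le (by exact_mod_cast hA))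
    have hmem : F n x ∈ F (n + 1) A := mem_F_succ.2 ⟨x, hx, rfl⟩
    exact_mod_cast Order.add_one_le_of_lt ((ih hnx).trans_lt (ZFSet.rank_lt_of_mem hmem))

theorem stmt_4 (n : ℕ) (A : ZFSet) (h : (F n A).rank < (n : Ordinal)) : F n A = A :=
  F_eq_self_of_rank_le (not_le.1 fun hA => h.not_ge (natCast_le_rank_F hA)).le
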